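/- arXiv:2511.02741 — 2 statements merged into one kernel-verified Lean document; each statement's English description precedes it below -/
import Mathlib

section
/- Let 0<α<1, 1<p<1/α, and define q by 1/q = 1/p − α. Let w be a weight on ℝ. Suppose there exists K>0 such that ‖w·M_α^+f‖_{L^{q,∞}} ≤ K·‖f·w‖_{L^p} for every measurable function f with f·w ∈ L^p(ℝ). Then [w]_{A_{p,q}^{+,*}} < ∞, and moreover [w]_{A_{p,q}^{+,*}} ≤ c·K for a constant c depending only on p, q, α. -/
open MeasureTheory Set ENNReal

/-- The one-sided fractional maximal operator
`M_α^+ f(x) = sup_{h>0} (1/h^{1-α}) ∫_x^{x+h} |f|`. -/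
noncomputable def MplusFrac (α : ℝ) (f : ℝ → ℝ) (x : ℝ) : ℝ≥0∞ :=
  ⨆ (h : ℝ) (_ : 0 < h),
    ENNReal.ofReal (1 / h ^ (1 - α)) * ∫⁻ y in Set.Ioo x (x + h), ENNReal.ofReal |f y|

/-- The weak `L^q` quasinorm `sup_{t>0} t |{x : g(x) > t}|^{1/q}` of an
`ℝ≥0∞`-valued function. -/
noncomputable def weakNorm (q : ℝ) (g : ℝ → ℝ≥0∞) : ℝ≥0∞ :=
  ⨆ (t : ℝ) (_ : 0 < t),
    ENNReal.ofReal t * (volume {x : ℝ | ENNReal.ofReal t < g x}) ^ (1 / q)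

/-- The weak `L^1` quasinorm `sup_{t>0} t |{x : |f(x)| > t}|` of a real function. -/
noncomputable def weakL1 (f : ℝ → ℝ) : ℝ≥0∞ :=
  ⨆ (t : ℝ) (_ : 0 < t), ENNReal.ofReal t * volume {x : ℝ | t < |f x|}

/-- `[w]_{A_{p,q}^{+,*}} = sup_{a<b<c} ((1/(c-a)) ‖w^q χ_{(a,b)}‖_{L^{1,∞}})^{1/q}
((1/(c-a)) ∫_b^c w^{-p'})^{1/p'}` where `p' = p/(p-1)`. -/
noncomputable def ApqStarPlusConst (p q : ℝ) (w : ℝ → ℝ) : ℝ≥0∞ :=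
  ⨆ (a : ℝ) (b : ℝ) (c : ℝ) (_ : a < b) (_ : b < c),
    (ENNReal.ofReal (1 / (c - a)) *
        weakL1 (Set.indicator (Set.Ioo a b) (fun x => w x ^ q))) ^ (1 / q) *
      (ENNReal.ofReal (1 / (c - a)) *
        ∫⁻ y in Set.Ioo b c, ENNReal.ofReal (w y ^ (-(p / (p - 1))))) ^ ((p - 1) / p)

/-!
Test the weak-type inequality with `f = χ_{(b,c)} w^{-p'}`, truncated so that `f w ∈ L^p`.
For `x ∈ (a,b)` the window `(x, x + (c - a)) ⊇ (b,c)` gives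
`M_α^+ f(x) ≥ (c-a)^{α-1} ∫_b^c w^{-p'}`, while `(w^{-p'} w)^p = w^{-p'}` gives
`‖f w‖_p^p ≤ ∫_b^c w^{-p'}`. Comparing level sets, the inequality bounds
`u |{x ∈ (a,b) : w(x) > u}|^{1/q}` uniformly in `u`, i.e. `‖w^q χ_{(a,b)}‖_{L^{1,∞}}^{1/q}`, and
since `1/q + 1/p' = 1 - α` all powers of `c - a` cancel: `[w]_{A_{p,q}^{+,*}} ≤ K`.
-/

lemma ENNReal.iSup_rpow_of_pos {ι : Sort*} (g : ι → ℝ≥0∞) {r : ℝ} (hr : 0 < r) :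
    (⨆ i, g i) ^ r = ⨆ i, g i ^ r :=
  (orderIsoRpow r hr).map_iSup g

lemma iSup_lintegral_ofReal_min_natCast {X : Type*} [MeasurableSpace X] {μ : Measure X}
    {g : X → ℝ} (hg : Measurable g) :
    ⨆ n : ℕ, ∫⁻ y, ENNReal.ofReal (min (g y) n) ∂μ = ∫⁻ y, ENNReal.ofReal (g y) ∂μ := by
  rw [← lintegral_iSup (fun n => (hg.min measurable_const).ennreal_ofReal)
    fun m n hmn y => ofReal_le_ofReal (min_le_min_left _ (Nat.cast_le.2 hmn))]
  congr 1 with y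
  simp only [ofReal_min, ofReal_natCast, ← inf_iSup_eq, iSup_natCast, inf_top_eq]

lemma memLp_mul_of_lintegral_ofReal_rpow_lt_top {X : Type*} [MeasurableSpace X] {μ : Measure X}
    {f w : X → ℝ} (hf : Measurable f) (hw : Measurable w) (hw0 : ∀ x, 0 ≤ w x) {p : ℝ}
    (hp : 0 < p) (hfin : ∫⁻ x, ENNReal.ofReal (|f x| * w x) ^ p ∂μ < ⊤) :
    MemLp (fun x => f x * w x) (ENNReal.ofReal p) μ := by
  refine ⟨(hf.mul hw).aestronglyMeasurable, ?_⟩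
  rw [eLpNorm_lt_top_iff_lintegral_rpow_enorm_lt_top (by simpa using hp) ofReal_ne_top,
    toReal_ofReal hp.le]
  simpa only [Real.enorm_eq_ofReal_abs, abs_mul, abs_of_nonneg (hw0 _)] using hfin

lemma mul_rpow_le_of_le_rpow_neg_conjExponent {p v m : ℝ} (hp : 1 < p) (hv : 0 ≤ v) (hm : 0 ≤ m)
    (hmv : m ≤ v ^ (-(p / (p - 1)))) : (m * v) ^ p ≤ m := by
  have hm_pow : m ^ (p - 1) ≤ v ^ (-p) :=
    calc m ^ (p - 1) ≤ (v ^ (-(p / (p - 1)))) ^ (p - 1) := by gcongr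
      _ = v ^ (-p) := by
        rw [← Real.rpow_mul hv]
        congr 1
        field_simp [(by linarith : p - 1 ≠ 0)]
  calc (m * v) ^ p = m * (m ^ (p - 1) * v ^ p) := by
        rw [Real.mul_rpow hm hv, ← mul_assoc, ← Real.rpow_one_add' hm (by linarith)]
        ring_nf
    _ ≤ m * ((v ^ p)⁻¹ * v ^ p) := by
        rw [← Real.rpow_neg hv]
        gcongr
    _ ≤ m := mul_le_of_le_one_right hm inv_mul_le_one

lemma lintegral_ofReal_indicator_mul_rpow_le {p : ℝ} (hp : 1 < p) {w h : ℝ → ℝ}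
    (hw : ∀ x, 0 ≤ w x) (h0 : ∀ y, 0 ≤ h y) (hhw : ∀ y, h y ≤ w y ^ (-(p / (p - 1))))
    {s : Set ℝ} (hs : MeasurableSet s) :
    ∫⁻ x, ENNReal.ofReal (|s.indicator h x| * w x) ^ p ≤ ∫⁻ y in s, ENNReal.ofReal (h y) := by
  rw [← lintegral_indicator hs]
  refine lintegral_mono fun x => ?_
  by_cases hx : x ∈ s
  · rw [indicator_of_mem hx, indicator_of_mem hx, abs_of_nonneg (h0 x),
      ofReal_rpow_of_nonneg (mul_nonneg (h0 x) (hw x)) (by linarith)]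
    exact ofReal_le_ofReal (mul_rpow_le_of_le_rpow_neg_conjExponent hp (hw x) (h0 x) (hhw x))
  · simp [hx, zero_rpow_of_pos (by linarith : 0 < p)]

lemma weakNorm_congr_ae {q : ℝ} {g h : ℝ → ℝ≥0∞} (hgh : g =ᵐ[volume] h) :
    weakNorm q g = weakNorm q h := by
  refine iSup_congr fun t => iSup_congr fun _ => ?_
  congr 2
  exact measure_congr (hgh.mono fun x hx => congrArg (ENNReal.ofReal t < ·) hx)

lemma weakL1_congr_ae {f g : ℝ → ℝ} (hfg : f =ᵐ[volume] g) : weakL1 f = weakL1 g := by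
  refine iSup_congr fun t => iSup_congr fun _ => ?_
  congr 1
  exact measure_congr (hfg.mono fun x hx => congrArg (t < |·|) hx)

lemma ApqStarPlusConst_congr_ae (p q : ℝ) {w v : ℝ → ℝ} (hwv : w =ᵐ[volume] v) :
    ApqStarPlusConst p q w = ApqStarPlusConst p q v := by
  refine iSup_congr fun a => iSup_congr fun b => iSup_congr fun c =>
    iSup_congr fun _ => iSup_congr fun _ => ?_
  congr 3
  · exact weakL1_congr_ae (hwv.mono fun x hx => by simp only [indicator, hx])
  · exact lintegral_congr_ae (ae_restrict_of_ae (hwv.mono fun x hx => by simp only [hx]))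

lemma ofReal_mul_measure_rpow_le_weakNorm {q t : ℝ} {g : ℝ → ℝ≥0∞} {E : Set ℝ} (hq : 0 < q)
    (ht : 0 < t) (hE : E ⊆ {x | ENNReal.ofReal t < g x}) :
    ENNReal.ofReal t * volume E ^ (1 / q) ≤ weakNorm q g :=
  calc ENNReal.ofReal t * volume E ^ (1 / q)
      ≤ ENNReal.ofReal t * volume {x | ENNReal.ofReal t < g x} ^ (1 / q) := by
        gcongr
    _ ≤ weakNorm q g := le_iSup₂ (f := fun t (_ : 0 < t) =>
        ENNReal.ofReal t * volume {x | ENNReal.ofReal t < g x} ^ (1 / q)) t ht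

lemma weakL1_indicator_rpow_le {q : ℝ} (hq : 0 < q) {w : ℝ → ℝ} (hw : ∀ x, 0 ≤ w x)
    {s : Set ℝ} {C : ℝ≥0∞}
    (h : ∀ u : ℝ, 0 < u → ENNReal.ofReal u * volume (s ∩ {x | u < w x}) ^ (1 / q) ≤ C) :
    weakL1 (s.indicator fun x => w x ^ q) ≤ C ^ q := by
  refine iSup₂_le fun t ht => ?_
  have hlevel : {x | t < |s.indicator (fun x => w x ^ q) x|} = s ∩ {x | t ^ (1 / q) < w x} := by
    ext x
    by_cases hx : x ∈ s
    · simp only [mem_ofPred_eq, mem_inter_iff, indicator_of_mem hx, hx, true_and,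
        abs_of_nonneg (Real.rpow_nonneg (hw x) q)]
      rw [← Real.rpow_lt_rpow_iff (by positivity) (hw x) hq, ← Real.rpow_mul ht.le,
        one_div_mul_cancel hq.ne', Real.rpow_one]
    · simp [hx, ht.le]
  calc ENNReal.ofReal t * volume {x | t < |s.indicator (fun x => w x ^ q) x|}
      = (ENNReal.ofReal (t ^ (1 / q)) * volume (s ∩ {x | t ^ (1 / q) < w x}) ^ (1 / q)) ^ q := by
        rw [hlevel, mul_rpow_of_nonneg _ _ hq.le, ← rpow_mul, one_div_mul_cancel hq.ne',
          rpow_one, ofReal_rpow_of_nonneg (by positivity) hq.le, ← Real.rpow_mul ht.le,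
          one_div_mul_cancel hq.ne', Real.rpow_one]
    _ ≤ C ^ q := rpow_le_rpow (h _ (by positivity)) hq.le

lemma ofReal_div_rpow_mul_lintegral_le_MplusFrac (α : ℝ) (f : ℝ → ℝ) {x h b c : ℝ} (hh : 0 < h)
    (hxb : x ≤ b) (hc : c ≤ x + h) :
    ENNReal.ofReal (1 / h ^ (1 - α)) * ∫⁻ y in Ioo b c, ENNReal.ofReal |f y| ≤ MplusFrac α f x :=
  calc ENNReal.ofReal (1 / h ^ (1 - α)) * ∫⁻ y in Ioo b c, ENNReal.ofReal |f y|
      ≤ ENNReal.ofReal (1 / h ^ (1 - α)) * ∫⁻ y in Ioo x (x + h), ENNReal.ofReal |f y| := by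
        gcongr
    _ ≤ MplusFrac α f x := le_iSup₂ (f := fun h (_ : 0 < h) =>
        ENNReal.ofReal (1 / h ^ (1 - α)) * ∫⁻ y in Ioo x (x + h), ENNReal.ofReal |f y|) h hh

lemma apq_factor_le_of_le_div {α p q K L : ℝ} {A W : ℝ≥0∞} (hq : 0 < q) (hp : 0 < p)
    (hsum : 1 / q + (p - 1) / p = 1 - α) (hL : 0 < L) (hA0 : A ≠ 0) (hAtop : A ≠ ⊤)
    (hW : W ≤ (ENNReal.ofReal K * A ^ (1 / p) / (ENNReal.ofReal (1 / L ^ (1 - α)) * A)) ^ q) :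
    (ENNReal.ofReal (1 / L) * W) ^ (1 / q) * (ENNReal.ofReal (1 / L) * A) ^ ((p - 1) / p) ≤
      ENNReal.ofReal K := by
  set x := ENNReal.ofReal (1 / L)
  have hx0 : x ≠ 0 := by simpa [x] using hL
  have hxtop : x ≠ ⊤ := ofReal_ne_top
  have hxs : ENNReal.ofReal (1 / L ^ (1 - α)) = x ^ (1 - α) := by
    rw [ofReal_rpow_of_pos (by positivity), Real.div_rpow zero_le_one hL.le, Real.one_rpow]
  have hB0 : x ^ (1 - α) * A ≠ 0 := mul_ne_zero (rpow_pos hx0.bot_lt hxtop).ne' hA0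
  have hBtop : x ^ (1 - α) * A ≠ ⊤ := mul_ne_top (rpow_ne_top_of_nonneg' hx0.bot_lt hxtop) hAtop
  rw [hxs] at hW
  calc (x * W) ^ (1 / q) * (x * A) ^ ((p - 1) / p)
      ≤ (x * (ENNReal.ofReal K * A ^ (1 / p) / (x ^ (1 - α) * A)) ^ q) ^ (1 / q) *
          (x * A) ^ ((p - 1) / p) := by
        gcongr
    _ = ENNReal.ofReal K * ((x ^ (1 / q) * x ^ ((p - 1) / p)) *
          (A ^ (1 / p) * A ^ ((p - 1) / p)) * (x ^ (1 - α) * A)⁻¹) := by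
        rw [mul_rpow_of_nonneg _ _ (by positivity), ← rpow_mul, mul_one_div_cancel hq.ne',
          rpow_one, mul_rpow_of_ne_top hxtop hAtop, div_eq_mul_inv (ENNReal.ofReal K * _)]
        ring
    _ = ENNReal.ofReal K := by
        rw [← rpow_add _ _ hx0 hxtop, ← rpow_add _ _ hA0 hAtop, hsum,
          (by field_simp; ring : 1 / p + (p - 1) / p = 1), rpow_one,
          ENNReal.mul_inv_cancel hB0 hBtop, mul_one]

def HasWeightedWeakTypeMplusFrac (α p q : ℝ) (w : ℝ → ℝ) (K : ℝ) : Prop :=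
  ∀ f : ℝ → ℝ, Measurable f → MemLp (fun x => f x * w x) (ENNReal.ofReal p) →
    weakNorm q (fun x => ENNReal.ofReal (w x) * MplusFrac α f x) ≤
      ENNReal.ofReal K * (∫⁻ x, ENNReal.ofReal (|f x| * w x) ^ p) ^ (1 / p)

namespace HasWeightedWeakTypeMplusFrac

variable {α p q K : ℝ} {w v : ℝ → ℝ}

lemma congr_ae (H : HasWeightedWeakTypeMplusFrac α p q w K) (hwv : w =ᵐ[volume] v) :
    HasWeightedWeakTypeMplusFrac α p q v K := by
  intro f hf hfv
  have hfw : MemLp (fun x => f x * w x) (ENNReal.ofReal p) :=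
    hfv.ae_eq (hwv.mono fun x hx => by simp only [hx])
  calc weakNorm q (fun x => ENNReal.ofReal (v x) * MplusFrac α f x)
      = weakNorm q (fun x => ENNReal.ofReal (w x) * MplusFrac α f x) :=
        weakNorm_congr_ae (hwv.mono fun x hx => by simp only [hx])
    _ ≤ ENNReal.ofReal K * (∫⁻ x, ENNReal.ofReal (|f x| * w x) ^ p) ^ (1 / p) := H f hf hfw
    _ = ENNReal.ofReal K * (∫⁻ x, ENNReal.ofReal (|f x| * v x) ^ p) ^ (1 / p) := by
        congr 2
        exact lintegral_congr_ae (hwv.mono fun x hx => by simp only [hx])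

/-- On `(a, b)` the maximal function dominates the average of `|f|` over `(b, c)` at scale
`c - a`, so `(a, b) ∩ {w > u}` lies in a level set of `w M_α^+ f`. -/
lemma ofReal_mul_measure_rpow_le (H : HasWeightedWeakTypeMplusFrac α p q w K) (hq : 0 < q)
    {f : ℝ → ℝ} (hf : Measurable f) (hfw : MemLp (fun x => f x * w x) (ENNReal.ofReal p))
    {a b c : ℝ} (hac : a < c) (hfin : ∫⁻ y in Ioo b c, ENNReal.ofReal |f y| ≠ ⊤)
    {u : ℝ} (hu : 0 < u) :
    ENNReal.ofReal u * (ENNReal.ofReal (1 / (c - a) ^ (1 - α)) *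
        ∫⁻ y in Ioo b c, ENNReal.ofReal |f y|) * volume (Ioo a b ∩ {x | u < w x}) ^ (1 / q) ≤
      ENNReal.ofReal K * (∫⁻ x, ENNReal.ofReal (|f x| * w x) ^ p) ^ (1 / p) := by
  set B := ENNReal.ofReal (1 / (c - a) ^ (1 - α)) * ∫⁻ y in Ioo b c, ENNReal.ofReal |f y|
  rcases eq_or_ne B 0 with hB0 | hB0
  · simp [hB0]
  have hBtop : B ≠ ⊤ := mul_ne_top ofReal_ne_top hfin
  have ht : ENNReal.ofReal (u * B.toReal) = ENNReal.ofReal u * B := by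
    rw [ofReal_mul hu.le, ofReal_toReal hBtop]
  have hlevel : Ioo a b ∩ {x | u < w x} ⊆
      {x | ENNReal.ofReal (u * B.toReal) < ENNReal.ofReal (w x) * MplusFrac α f x} := by
    rintro x ⟨hx, hux⟩
    calc ENNReal.ofReal (u * B.toReal) = ENNReal.ofReal u * B := ht
      _ < ENNReal.ofReal (w x) * B :=
        ENNReal.mul_lt_mul_left hB0 hBtop ((ofReal_lt_ofReal_iff_of_nonneg hu.le).2 hux)
      _ ≤ ENNReal.ofReal (w x) * MplusFrac α f x := by
        gcongr
        exact ofReal_div_rpow_mul_lintegral_le_MplusFrac α f (by linarith) hx.2.le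
          (by linarith [hx.1])
  rw [← ht]
  exact (ofReal_mul_measure_rpow_le_weakNorm hq
    (mul_pos hu (toReal_pos hB0 hBtop)) hlevel).trans (H f hf hfw)

/-- The test function is `χ_{(b,c)} min(w^{-p'}, n)`; the truncation keeps `f w` in `L^p`. -/
lemma apq_factor_truncated_le (H : HasWeightedWeakTypeMplusFrac α p q w K) (hq : 0 < q)
    (hp : 1 < p) (hsum : 1 / q + (p - 1) / p = 1 - α) (hw : Measurable w) (hw0 : ∀ x, 0 ≤ w x)
    {a b c : ℝ} (hac : a < c) (n : ℕ) :
    (ENNReal.ofReal (1 / (c - a)) * weakL1 ((Ioo a b).indicator fun x => w x ^ q)) ^ (1 / q) *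
      (ENNReal.ofReal (1 / (c - a)) *
        ∫⁻ y in Ioo b c, ENNReal.ofReal (min (w y ^ (-(p / (p - 1)))) n)) ^ ((p - 1) / p) ≤
      ENNReal.ofReal K := by
  set h : ℝ → ℝ := fun y => min (w y ^ (-(p / (p - 1)))) n
  set A := ∫⁻ y in Ioo b c, ENNReal.ofReal (h y)
  rcases eq_or_ne A 0 with hA0 | hA0
  · have : 0 < (p - 1) / p := div_pos (by linarith) (by linarith)
    simp [hA0, zero_rpow_of_pos this]
  have h0 : ∀ y, 0 ≤ h y := fun y => le_min (Real.rpow_nonneg (hw0 y) _) n.cast_nonneg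
  have hmeas : Measurable h := (hw.pow_const _).min measurable_const
  have hAtop : A ≠ ⊤ := by
    refine ne_top_of_le_ne_top ?_ (lintegral_mono fun y => ofReal_le_ofReal (min_le_right _ _))
    simp [Real.volume_Ioo, ENNReal.mul_eq_top]
  set f := (Ioo b c).indicator h
  have hfp : ∫⁻ x, ENNReal.ofReal (|f x| * w x) ^ p ≤ A :=
    lintegral_ofReal_indicator_mul_rpow_le hp hw0 h0 (fun y => min_le_left _ _) measurableSet_Ioo
  have hfw : MemLp (fun x => f x * w x) (ENNReal.ofReal p) :=
    memLp_mul_of_lintegral_ofReal_rpow_lt_top (hmeas.indicator measurableSet_Ioo) hw hw0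
      (by linarith) (hfp.trans_lt hAtop.lt_top)
  have hfA : ∫⁻ y in Ioo b c, ENNReal.ofReal |f y| = A :=
    setLIntegral_congr_fun measurableSet_Ioo fun y hy => by
      simp only [f, indicator_of_mem hy, abs_of_nonneg (h0 y)]
  have hB0 : ENNReal.ofReal (1 / (c - a) ^ (1 - α)) * A ≠ 0 :=
    mul_ne_zero (by simpa using Real.rpow_pos_of_pos (sub_pos.2 hac) _) hA0
  have hBtop : ENNReal.ofReal (1 / (c - a) ^ (1 - α)) * A ≠ ⊤ := mul_ne_top ofReal_ne_top hAtop
  refine apq_factor_le_of_le_div hq (by linarith) hsum (sub_pos.2 hac) hA0 hAtop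
    (weakL1_indicator_rpow_le hq hw0 fun u hu => ?_)
  rw [ENNReal.le_div_iff_mul_le (Or.inl hB0) (Or.inl hBtop), mul_right_comm]
  calc ENNReal.ofReal u * (ENNReal.ofReal (1 / (c - a) ^ (1 - α)) * A) *
        volume (Ioo a b ∩ {x | u < w x}) ^ (1 / q)
      ≤ ENNReal.ofReal K * (∫⁻ x, ENNReal.ofReal (|f x| * w x) ^ p) ^ (1 / p) := by
        have := H.ofReal_mul_measure_rpow_le (f := f) hq (hmeas.indicator measurableSet_Ioo) hfw
          hac (hfA ▸ hAtop) hu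
        rwa [hfA] at this
    _ ≤ ENNReal.ofReal K * A ^ (1 / p) := by gcongr

lemma apqStarPlusConst_le (H : HasWeightedWeakTypeMplusFrac α p q w K) (hq : 0 < q)
    (hp : 1 < p) (hsum : 1 / q + (p - 1) / p = 1 - α) (hw : Measurable w) (hw0 : ∀ x, 0 ≤ w x) :
    ApqStarPlusConst p q w ≤ ENNReal.ofReal K := by
  refine iSup_le fun a => iSup_le fun b => iSup_le fun c =>
    iSup_le fun hab => iSup_le fun hbc => ?_
  have hr : 0 < (p - 1) / p := div_pos (by linarith) (by linarith)
  rw [← iSup_lintegral_ofReal_min_natCast (hw.pow_const _), ENNReal.mul_iSup,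
    iSup_rpow_of_pos _ hr, ENNReal.mul_iSup]
  exact iSup_le (H.apq_factor_truncated_le hq hp hsum hw hw0 (hab.trans hbc))

end HasWeightedWeakTypeMplusFrac

theorem stmt5_general (α p q : ℝ) (hp : 1 < p) (hpα : p < 1 / α)
    (hq : 1 / q = 1 / p - α) :
    ∃ c : ℝ, 0 < c ∧
      ∀ w : ℝ → ℝ, (∀ x, 0 ≤ w x) → LocallyIntegrable w →
        ∀ K : ℝ, 0 < K →
        (∀ f : ℝ → ℝ, Measurable f →
            MemLp (fun x => f x * w x) (ENNReal.ofReal p) →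
            weakNorm q (fun x => ENNReal.ofReal (w x) * MplusFrac α f x) ≤
              ENNReal.ofReal K * (∫⁻ x, ENNReal.ofReal (|f x| * w x) ^ p) ^ (1 / p)) →
        ApqStarPlusConst p q w < ⊤ ∧
          ApqStarPlusConst p q w ≤ ENNReal.ofReal (c * K) := by
  have hp0 : 0 < p := by linarith
  have hα : 0 < α := one_div_pos.1 (hp0.trans hpα)
  have hq0 : 0 < q := one_div_pos.1 (hq ▸ sub_pos.2 ((lt_one_div hα hp0).2 hpα))
  have hsum : 1 / q + (p - 1) / p = 1 - α := by
    rw [hq]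
    field_simp
    ring
  refine ⟨1, one_pos, fun w hw0 hw K _ (H : HasWeightedWeakTypeMplusFrac α p q w K) => ?_⟩
  obtain ⟨v, hv, hv0, hwv⟩ :=
    hw.aestronglyMeasurable.aemeasurable.exists_ae_eq_range_subset (ae_of_all _ hw0) nonempty_Ici
  have hApq : ApqStarPlusConst p q v ≤ ENNReal.ofReal K :=
    (H.congr_ae hwv).apqStarPlusConst_le hq0 hp hsum hv fun x => hv0 (mem_range_self x)
  rw [ApqStarPlusConst_congr_ae p q hwv, one_mul]
  exact ⟨hApq.trans_lt ofReal_lt_top, hApq⟩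

theorem stmt5 (α p q : ℝ) (hα : 0 < α) (hα1 : α < 1) (hp : 1 < p) (hpα : p < 1 / α)
    (hq : 1 / q = 1 / p - α) :
    ∃ c : ℝ, 0 < c ∧
      ∀ w : ℝ → ℝ, (∀ x, 0 ≤ w x) → LocallyIntegrable w →
        ∀ K : ℝ, 0 < K →
        (∀ f : ℝ → ℝ, Measurable f →
            MemLp (fun x => f x * w x) (ENNReal.ofReal p) →
            weakNorm q (fun x => ENNReal.ofReal (w x) * MplusFrac α f x) ≤
              ENNReal.ofReal K * (∫⁻ x, ENNReal.ofReal (|f x| * w x) ^ p) ^ (1 / p)) →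
        ApqStarPlusConst p q w < ⊤ ∧
          ApqStarPlusConst p q w ≤ ENNReal.ofReal (c * K) :=
  stmt5_general α p q hp hpα hq
end

section
/- Let 1<p<∞ and let ρ be a weight on ℝ. Then [ρ]_{A_p^+} ≤ 2^p · sup over all a<c, with b = (a+c)/2, of ((1/(b-a))∫_a^b ρ)·((1/(b-a))∫_b^c ρ^{-1/(p-1)})^{p-1}. -/
open MeasureTheory Set ENNReal

/-!
Given `a < b < c`, put `h = c - a`. The interval `(b - h, b + h)` has midpoint `b` and
half-length `h`, and it contains both `(a, b)` and `(b, c)`. So each term of `[ρ]_{A_p^+}` is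
dominated by a term of the midpoint constant with the same normalization `1 / h`, and the
inequality holds even without the factor `2 ^ p ≥ 1`.
-/

/-- The one-sided Muckenhoupt constant
`[ρ]_{A_p^+} = sup_{a<b<c} ((1/(c-a))∫_a^b ρ) ((1/(c-a))∫_b^c ρ^{-1/(p-1)})^{p-1}`. -/
noncomputable def ApPlusConst (p : ℝ) (ρ : ℝ → ℝ) : ℝ≥0∞ :=
  ⨆ (a : ℝ) (b : ℝ) (c : ℝ) (_ : a < b) (_ : b < c),
    (ENNReal.ofReal (1 / (c - a)) * ∫⁻ y in Set.Ioo a b, ENNReal.ofReal (ρ y)) *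
      (ENNReal.ofReal (1 / (c - a)) *
        ∫⁻ y in Set.Ioo b c, ENNReal.ofReal (ρ y ^ (-(1 / (p - 1))))) ^ (p - 1)

/-- The middle-point variant of the `A_p^+` constant, where `b = (a+c)/2` and the
averages are normalized by `b - a`. -/
noncomputable def ApPlusMidConst (p : ℝ) (ρ : ℝ → ℝ) : ℝ≥0∞ :=
  ⨆ (a : ℝ) (c : ℝ) (_ : a < c),
    (ENNReal.ofReal (1 / ((a + c) / 2 - a)) *
        ∫⁻ y in Set.Ioo a ((a + c) / 2), ENNReal.ofReal (ρ y)) *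
      (ENNReal.ofReal (1 / ((a + c) / 2 - a)) *
        ∫⁻ y in Set.Ioo ((a + c) / 2) c, ENNReal.ofReal (ρ y ^ (-(1 / (p - 1))))) ^ (p - 1)

lemma apPlus_term_le_apPlusMidConst {p : ℝ} (hp : 1 ≤ p) (ρ : ℝ → ℝ) {a b c : ℝ}
    (hab : a < b) (hbc : b < c) :
    (ENNReal.ofReal (1 / (c - a)) * ∫⁻ y in Ioo a b, ENNReal.ofReal (ρ y)) *
        (ENNReal.ofReal (1 / (c - a)) *
          ∫⁻ y in Ioo b c, ENNReal.ofReal (ρ y ^ (-(1 / (p - 1))))) ^ (p - 1) ≤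
      ApPlusMidConst p ρ := by
  have hmid : ((b - (c - a)) + (b + (c - a))) / 2 = b := by ring
  have hhalf : b - (b - (c - a)) = c - a := by ring
  refine le_trans ?_ (le_iSup_of_le (b - (c - a)) (le_iSup_of_le (b + (c - a))
    (le_iSup_of_le (by linarith) le_rfl)))
  rw [hmid, hhalf]
  gcongr
  · linarith
  · linarith

lemma apPlusConst_le_apPlusMidConst {p : ℝ} (hp : 1 ≤ p) (ρ : ℝ → ℝ) :
    ApPlusConst p ρ ≤ ApPlusMidConst p ρ :=
  iSup_le fun _ => iSup_le fun _ => iSup_le fun _ => iSup_le fun hab => iSup_le fun hbc =>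
    apPlus_term_le_apPlusMidConst hp ρ hab hbc

theorem stmt15_general (p : ℝ) (hp : 1 < p) (ρ : ℝ → ℝ) :
    ApPlusConst p ρ ≤ ENNReal.ofReal (2 ^ p) * ApPlusMidConst p ρ := by
  have h_two_pow : 1 ≤ ENNReal.ofReal (2 ^ p) :=
    ENNReal.one_le_ofReal.mpr (Real.one_le_rpow one_le_two (by linarith))
  exact (apPlusConst_le_apPlusMidConst hp.le ρ).trans (le_mul_of_one_le_left' h_two_pow)

theorem stmt15 (p : ℝ) (hp : 1 < p) (ρ : ℝ → ℝ) (hρ : ∀ x, 0 ≤ ρ x)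
    (hρloc : LocallyIntegrable ρ) :
    ApPlusConst p ρ ≤ ENNReal.ofReal (2 ^ p) * ApPlusMidConst p ρ :=
  stmt15_general p hp ρ
end
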